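/- Every positive integer n can be written as n = m1^2 + m2^2 + m3^2 + m4^2 for some non-negative integers m1, m2, m3, m4 with gcd(m1, m2, m3, m4) = 2^l, where l is the non-negative integer such that (2^(2l+1) ∣ n or l = 0) and 2^(2l+3) ∤ n. -/
import Mathlib

/-- A primitive four-square representation over ℤ. -/
def PR (n : ℕ) : Prop :=
  ∃ a b c d : ℤ, a ^ 2 + b ^ 2 + c ^ 2 + d ^ 2 = (n : ℤ) ∧
    ∀ q : ℕ, q.Prime → (q : ℤ) ∣ a → (q : ℤ) ∣ b → (q : ℤ) ∣ c → (q : ℤ) ∣ d → False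

lemma PR_one : PR 1 := by
  refine ⟨1, 0, 0, 0, by norm_num, ?_⟩
  intro q hq h1 _ _ _
  exact hq.one_lt.ne' (Nat.dvd_one.mp (by exact_mod_cast h1))

lemma PR_mul {m k : ℕ} (hcop : Nat.Coprime m k) (hm : PR m) (hk : PR k) : PR (m * k) := by
  obtain ⟨a, b, c, d, hα, hαp⟩ := hm
  obtain ⟨e, f, g, h, hβ, hβp⟩ := hk
  refine ⟨a*e - b*f - c*g - d*h, a*f + b*e + c*h - d*g, a*g - b*h + c*e + d*f,
    a*h + b*g - c*f + d*e, ?_, ?_⟩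
  · push_cast
    linear_combination (e^2 + f^2 + g^2 + h^2) * hα + (m:ℤ) * hβ
  · intro q hq hA hB hC hD
    set A := a*e - b*f - c*g - d*h with hAdef
    set B := a*f + b*e + c*h - d*g with hBdef
    set C := a*g - b*h + c*e + d*f with hCdef
    set D := a*h + b*g - c*f + d*e with hDdef
    have hqz : Prime (q : ℤ) := Nat.prime_iff_prime_int.mp hq
    have hq2 : (q : ℤ) ∣ (m : ℤ) * (k : ℤ) := by
      have hdvd : (q:ℤ) ∣ A^2 + B^2 + C^2 + D^2 :=
        dvd_add (dvd_add (dvd_add (dvd_pow hA two_ne_zero) (dvd_pow hB two_ne_zero))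
          (dvd_pow hC two_ne_zero)) (dvd_pow hD two_ne_zero)
      have heq : A^2 + B^2 + C^2 + D^2 = (m:ℤ) * (k:ℤ) := by
        linear_combination (e^2 + f^2 + g^2 + h^2) * hα + (m : ℤ) * hβ
      rwa [heq] at hdvd
    have hqmk : q ∣ m * k := by exact_mod_cast hq2
    rcases (Nat.Prime.dvd_mul hq).mp hqmk with hqm | hqk
    · have hqk' : ¬ (q:ℤ) ∣ (k:ℤ) := by
        intro hh
        have h2 : q ∣ k := by exact_mod_cast hh
        have := Nat.Coprime.eq_one_of_dvd (Nat.Coprime.coprime_dvd_left hqm hcop) h2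
        exact hq.one_lt.ne' this
      have ha' : (q:ℤ) ∣ a * (k:ℤ) := by
        have heq : a * (k:ℤ) = A*e + B*f + C*g + D*h := by linear_combination (-a) * hβ
        rw [heq]
        exact dvd_add (dvd_add (dvd_add (hA.mul_right e) (hB.mul_right f)) (hC.mul_right g)) (hD.mul_right h)
      have hb' : (q:ℤ) ∣ b * (k:ℤ) := by
        have heq : b * (k:ℤ) = B*e + D*g - A*f - C*h := by linear_combination (-b) * hβ
        rw [heq]
        exact dvd_sub (dvd_sub (dvd_add (hB.mul_right e) (hD.mul_right g)) (hA.mul_right f)) (hC.mul_right h)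
      have hc' : (q:ℤ) ∣ c * (k:ℤ) := by
        have heq : c * (k:ℤ) = B*h + C*e - A*g - D*f := by linear_combination (-c) * hβ
        rw [heq]
        exact dvd_sub (dvd_sub (dvd_add (hB.mul_right h) (hC.mul_right e)) (hA.mul_right g)) (hD.mul_right f)
      have hd' : (q:ℤ) ∣ d * (k:ℤ) := by
        have heq : d * (k:ℤ) = C*f + D*e - A*h - B*g := by linear_combination (-d) * hβ
        rw [heq]
        exact dvd_sub (dvd_sub (dvd_add (hC.mul_right f) (hD.mul_right e)) (hA.mul_right h)) (hB.mul_right g)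
      exact hαp q hq ((hqz.dvd_mul.mp ha').resolve_right hqk')
        ((hqz.dvd_mul.mp hb').resolve_right hqk')
        ((hqz.dvd_mul.mp hc').resolve_right hqk')
        ((hqz.dvd_mul.mp hd').resolve_right hqk')
    · have hqm' : ¬ (q:ℤ) ∣ (m:ℤ) := by
        intro hh
        have h2 : q ∣ m := by exact_mod_cast hh
        exact hq.one_lt.ne' (Nat.Coprime.eq_one_of_dvd (Nat.Coprime.coprime_dvd_left h2 hcop) hqk)
      have he' : (q:ℤ) ∣ e * (m:ℤ) := by
        have heq : e * (m:ℤ) = A*a + B*b + C*c + D*d := by linear_combination (-e) * hα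
        rw [heq]
        exact dvd_add (dvd_add (dvd_add (hA.mul_right a) (hB.mul_right b)) (hC.mul_right c)) (hD.mul_right d)
      have hf' : (q:ℤ) ∣ f * (m:ℤ) := by
        have heq : f * (m:ℤ) = B*a + C*d - A*b - D*c := by linear_combination (-f) * hα
        rw [heq]
        exact dvd_sub (dvd_sub (dvd_add (hB.mul_right a) (hC.mul_right d)) (hA.mul_right b)) (hD.mul_right c)
      have hg' : (q:ℤ) ∣ g * (m:ℤ) := by
        have heq : g * (m:ℤ) = C*a + D*b - A*c - B*d := by linear_combination (-g) * hα
        rw [heq]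
        exact dvd_sub (dvd_sub (dvd_add (hC.mul_right a) (hD.mul_right b)) (hA.mul_right c)) (hB.mul_right d)
      have hh' : (q:ℤ) ∣ h * (m:ℤ) := by
        have heq : h * (m:ℤ) = B*c + D*a - A*d - C*b := by linear_combination (-h) * hα
        rw [heq]
        exact dvd_sub (dvd_sub (dvd_add (hB.mul_right c) (hD.mul_right a)) (hA.mul_right d)) (hC.mul_right b)
      exact hβp q hq ((hqz.dvd_mul.mp he').resolve_right hqm')
        ((hqz.dvd_mul.mp hf').resolve_right hqm')
        ((hqz.dvd_mul.mp hg').resolve_right hqm')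
        ((hqz.dvd_mul.mp hh').resolve_right hqm')

lemma PR_two : PR 2 := by
  refine ⟨1, 1, 0, 0, by norm_num, ?_⟩
  intro q hq h1 _ _ _
  exact hq.one_lt.ne' (Nat.dvd_one.mp (by exact_mod_cast h1))

lemma PR_four : PR 4 := by
  refine ⟨1, 1, 1, 1, by norm_num, ?_⟩
  intro q hq h1 _ _ _
  exact hq.one_lt.ne' (Nat.dvd_one.mp (by exact_mod_cast h1))

lemma exists_pos_rep {p : ℕ} (hp : p.Prime) :
    ∃ a b c d : ℕ, a ^ 2 + b ^ 2 + c ^ 2 + d ^ 2 = p ∧ 0 < a := by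
  obtain ⟨a, b, c, d, h⟩ := Nat.sum_four_squares p
  have hppos : 0 < p := hp.pos
  rcases Nat.eq_zero_or_pos a with ha | ha
  · rcases Nat.eq_zero_or_pos b with hb | hb
    · rcases Nat.eq_zero_or_pos c with hc | hc
      · exact ⟨d, a, b, c, by omega, by nlinarith⟩
      · exact ⟨c, a, b, d, by omega, hc⟩
    · exact ⟨b, a, c, d, by omega, hb⟩
  · exact ⟨a, b, c, d, h, ha⟩

lemma PR_prime_pow {p : ℕ} (hp : p.Prime) (hp2 : p ≠ 2) (e : ℕ) : PR (p ^ e) := by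
  cases e with
  | zero => simpa using PR_one
  | succ e =>
    obtain ⟨a, b, c, d, hrep, hapos⟩ := exists_pos_rep hp
    have halt : a < p := by nlinarith [hp.two_le]
    have hpa : ¬ (p : ℤ) ∣ (a : ℤ) := by
      rw [Int.natCast_dvd_natCast]
      exact Nat.not_dvd_of_pos_of_lt hapos halt
    set s : ℤ := (b:ℤ)^2 + (c:ℤ)^2 + (d:ℤ)^2 with hs
    have hap : (a:ℤ)^2 + s = (p:ℤ) := by push_cast [← hrep]; ring
    have hp2' : ¬ (p : ℤ) ∣ 2 := by
      rw [show (2:ℤ) = ((2:ℕ):ℤ) by norm_num, Int.natCast_dvd_natCast]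
      intro hdvd
      exact hp2 ((Nat.prime_dvd_prime_iff_eq hp Nat.prime_two).mp hdvd)
    have hpz : Prime (p : ℤ) := Nat.prime_iff_prime_int.mp hp
    have key : ∀ e : ℕ, ∃ x y : ℤ, x^2 + s * y^2 = (p:ℤ)^(e+1) ∧
        (p:ℤ) ∣ (x - (a:ℤ) * y) ∧ ¬ (p:ℤ) ∣ x := by
      intro e
      induction e with
      | zero => exact ⟨(a:ℤ), 1, by linear_combination hap, by simp, hpa⟩
      | succ e ih =>
        obtain ⟨x, y, hxy, hcong, hpx⟩ := ih
        refine ⟨(a:ℤ)*x - s*y, x + (a:ℤ)*y, ?_, ?_, ?_⟩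
        · linear_combination (x^2 + s*y^2) * hap + (p:ℤ) * hxy
        · exact ⟨-y, by linear_combination (-y) * hap⟩
        · intro hdvd
          have h2ax : (p:ℤ) ∣ 2*(a:ℤ)*x := by
            have heq : 2*(a:ℤ)*x = ((a:ℤ)*x - s*y) + ((a:ℤ)*(x - (a:ℤ)*y) + (p:ℤ)*y) := by
              linear_combination y * hap
            rw [heq]
            exact dvd_add hdvd (dvd_add (hcong.mul_left _) (Dvd.intro y rfl))
          rcases hpz.dvd_mul.mp h2ax with h' | h'
          · rcases hpz.dvd_mul.mp h' with h'' | h''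
            · exact hp2' h''
            · exact hpa h''
          · exact hpx h'
    obtain ⟨x, y, hxy, -, hpx⟩ := key e
    refine ⟨x, y*(b:ℤ), y*(c:ℤ), y*(d:ℤ), ?_, ?_⟩
    · push_cast
      linear_combination hxy
    · intro q hq hx hyb hyc hyd
      have hqz : Prime (q : ℤ) := Nat.prime_iff_prime_int.mp hq
      have hsum : (q:ℤ) ∣ (p:ℤ)^(e+1) := by
        have hdvd : (q:ℤ) ∣ x^2 + (y*(b:ℤ))^2 + (y*(c:ℤ))^2 + (y*(d:ℤ))^2 :=
          dvd_add (dvd_add (dvd_add (dvd_pow hx two_ne_zero) (dvd_pow hyb two_ne_zero))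
            (dvd_pow hyc two_ne_zero)) (dvd_pow hyd two_ne_zero)
        have heq : x^2 + (y*(b:ℤ))^2 + (y*(c:ℤ))^2 + (y*(d:ℤ))^2 = (p:ℤ)^(e+1) := by
          linear_combination hxy
        rwa [heq] at hdvd
      have hqp : q ∣ p ^ (e+1) := by exact_mod_cast hsum
      have : q = p := (Nat.prime_dvd_prime_iff_eq hq hp).mp (hq.dvd_of_dvd_pow hqp)
      subst this
      exact hpx hx

lemma PR_odd : ∀ m : ℕ, Odd m → PR m := by
  refine Nat.recOnPosPrimePosCoprime ?_ ?_ ?_ ?_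
  · intro p e hpp hepos hodd
    have hp : p.Prime := hpp
    have hp2 : p ≠ 2 := by
      rintro rfl
      obtain ⟨k, hk⟩ := hodd
      have : 2 ∣ 2 ^ e := dvd_pow_self 2 (by omega)
      omega
    exact PR_prime_pow hp hp2 e
  · intro h; exact absurd h (by simp)
  · intro _; exact PR_one
  · intro x y hx hy hcop hPx hPy hodd
    rw [Nat.odd_mul] at hodd
    exact PR_mul hcop (hPx hodd.1) (hPy hodd.2)

lemma PR_nat {n : ℕ} (h : PR n) :
    ∃ a b c d : ℕ, a ^ 2 + b ^ 2 + c ^ 2 + d ^ 2 = n ∧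
      Nat.gcd a (Nat.gcd b (Nat.gcd c d)) = 1 := by
  obtain ⟨a, b, c, d, hs, hp⟩ := h
  refine ⟨a.natAbs, b.natAbs, c.natAbs, d.natAbs, ?_, ?_⟩
  · have : ((a.natAbs ^ 2 + b.natAbs ^ 2 + c.natAbs ^ 2 + d.natAbs ^ 2 : ℕ) : ℤ) = (n : ℤ) := by
      push_cast [Int.natCast_natAbs]
      rw [sq_abs, sq_abs, sq_abs, sq_abs]
      exact hs
    exact_mod_cast this
  · by_contra hg
    obtain ⟨q, hq, hqdvd⟩ := Nat.exists_prime_and_dvd hg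
    have h1 : q ∣ a.natAbs := hqdvd.trans (Nat.gcd_dvd_left _ _)
    have h2 : q ∣ b.natAbs := hqdvd.trans ((Nat.gcd_dvd_right _ _).trans (Nat.gcd_dvd_left _ _))
    have h3 : q ∣ c.natAbs := hqdvd.trans ((Nat.gcd_dvd_right _ _).trans
      ((Nat.gcd_dvd_right _ _).trans (Nat.gcd_dvd_left _ _)))
    have h4 : q ∣ d.natAbs := hqdvd.trans ((Nat.gcd_dvd_right _ _).trans
      ((Nat.gcd_dvd_right _ _).trans (Nat.gcd_dvd_right _ _)))
    exact hp q hq ((Int.natCast_dvd_natCast.mpr h1).trans (Int.natAbs_dvd.mpr dvd_rfl))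
      ((Int.natCast_dvd_natCast.mpr h2).trans (Int.natAbs_dvd.mpr dvd_rfl))
      ((Int.natCast_dvd_natCast.mpr h3).trans (Int.natAbs_dvd.mpr dvd_rfl))
      ((Int.natCast_dvd_natCast.mpr h4).trans (Int.natAbs_dvd.mpr dvd_rfl))

/-- Refined Lagrange four-square theorem: every positive integer `n` is a sum of
four squares whose gcd is the power of `2` determined by the 2-adic valuation of
`n`: it is `2^l` when `2^(2l+1) ∣ n` and `2^(2l+3) ∤ n`, and `1` when no such
`l` exists. -/
theorem stmt_1 (n : ℕ) (hn : 0 < n) :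
    ∃ m1 m2 m3 m4 : ℕ, n = m1 ^ 2 + m2 ^ 2 + m3 ^ 2 + m4 ^ 2 ∧
      ((∃ l : ℕ, 2 ^ (2 * l + 1) ∣ n ∧ ¬ 2 ^ (2 * l + 3) ∣ n ∧
          Nat.gcd m1 (Nat.gcd m2 (Nat.gcd m3 m4)) = 2 ^ l) ∨
        ((¬ ∃ l : ℕ, 2 ^ (2 * l + 1) ∣ n ∧ ¬ 2 ^ (2 * l + 3) ∣ n) ∧
          Nat.gcd m1 (Nat.gcd m2 (Nat.gcd m3 m4)) = 1)) := by
  have hn0 : n ≠ 0 := hn.ne'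
  set v := n.factorization 2 with hv
  have hmn : 2 ^ v * (n / 2 ^ v) = n := Nat.ordProj_mul_ordCompl_eq_self n 2
  set m := n / 2 ^ v with hmdef
  have hm2 : ¬ 2 ∣ m := Nat.not_dvd_ordCompl Nat.prime_two hn0
  have hmOdd : Odd m := Nat.odd_iff.mpr (by omega)
  have hnotsucc : ¬ 2 ^ (v + 1) ∣ n := Nat.pow_succ_factorization_not_dvd hn0 Nat.prime_two
  rcases Nat.eq_zero_or_pos v with hv0 | hvpos
  · -- n odd
    have hnm : n = m := by rw [hv0] at hmn; simpa using hmn.symm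
    obtain ⟨a, b, c, d, hs, hg⟩ := PR_nat (PR_odd n (hnm ▸ hmOdd))
    refine ⟨a, b, c, d, hs.symm, Or.inr ⟨?_, hg⟩⟩
    rintro ⟨l, h1, -⟩
    have h2 : 2 ∣ n := dvd_trans (dvd_pow_self 2 (by omega : 2*l+1 ≠ 0)) h1
    have := (Nat.Prime.factorization_pos_of_dvd Nat.prime_two hn0 h2)
    omega
  · -- v ≥ 1
    set l := (v - 1) / 2 with hl
    have hr : v = 2 * l + 1 ∨ v = 2 * l + 2 := by omega
    have hrep : PR (2 ^ (v - 2 * l) * m) := by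
      rcases hr with h | h
      · have : v - 2 * l = 1 := by omega
        rw [this, pow_one]
        exact PR_mul ((Nat.prime_two.coprime_iff_not_dvd).mpr hm2) PR_two (PR_odd m hmOdd)
      · have : v - 2 * l = 2 := by omega
        rw [this]
        have hcop : Nat.Coprime (2^2) m :=
          Nat.Coprime.pow_left _ ((Nat.prime_two.coprime_iff_not_dvd).mpr hm2)
        exact PR_mul hcop (show PR (2^2) by norm_num; exact PR_four) (PR_odd m hmOdd)
    obtain ⟨a, b, c, d, hs, hg⟩ := PR_nat hrep
    refine ⟨2^l * a, 2^l * b, 2^l * c, 2^l * d, ?_, Or.inl ⟨l, ?_, ?_, ?_⟩⟩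
    · have hkey : n = 2 ^ (2 * l) * (2 ^ (v - 2 * l) * m) := by
        rw [← mul_assoc, ← pow_add, show 2 * l + (v - 2 * l) = v by omega]
        exact hmn.symm
      rw [hkey, ← hs]
      ring
    · calc 2 ^ (2 * l + 1) ∣ 2 ^ v := pow_dvd_pow 2 (by omega)
        _ ∣ n := Nat.ordProj_dvd n 2
    · intro hdvd
      exact hnotsucc (dvd_trans (pow_dvd_pow 2 (by omega : v + 1 ≤ 2 * l + 3)) hdvd)
    · rw [Nat.gcd_mul_left, Nat.gcd_mul_left, Nat.gcd_mul_left, hg, mul_one]
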